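/- Let U_1, U_2, U_3 be i.i.d. uniform on [0,1], W_1 = 2 - 3|U_2 - U_1| - 6 U_1(1 - U_1), W_2 = 2 - 3|U_3 - U_2| - 6 U_2(1 - U_2). Then E[W_1^2 W_2^2] = 23/70. -/

import Mathlib

/-! Conditionally on the shared variable `y = U 1`, the two factors are independent, so the
expectation is `∫₀¹ A(y) B(y) dy` with
`A(y) = ∫₀¹ W(x, y)² dx = 6/5 - 3y - 3y² + 12y³ - 6y⁴` and `B(y) = ∫₀¹ W(y, z)² dz = 1 - 3y + 3y²`.
Both are piecewise-polynomial integrals, split at the kink `x = y` of the absolute value. -/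

open MeasureTheory ProbabilityTheory Set

theorem intervalIntegral.integral_sum_monomials {n : ℕ} (c : Fin n → ℝ) (a b : ℝ) :
    ∫ x in a..b, ∑ i, c i * x ^ (i : ℕ) =
      ∑ i, c i * (b ^ ((i : ℕ) + 1) - a ^ ((i : ℕ) + 1)) / ((i : ℕ) + 1) := by
  rw [intervalIntegral.integral_finsetSum fun i _ =>
    (by fun_prop : Continuous _).intervalIntegrable a b]
  simp [intervalIntegral.integral_const_mul, integral_pow, mul_div_assoc]

theorem integral_Icc_eq_intervalIntegral_add {a b : ℝ} (hab : a ≤ b) {g : ℝ → ℝ}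
    (hg : Continuous g) (c : ℝ) :
    ∫ x in Icc a b, g x = (∫ x in a..c, g x) + ∫ x in c..b, g x := by
  rw [integral_Icc_eq_integral_Ioc, ← intervalIntegral.integral_of_le hab,
    intervalIntegral.integral_add_adjacent_intervals (hg.intervalIntegrable a c)
      (hg.intervalIntegrable c b)]

theorem ProbabilityTheory.iIndepFun.map_prodMk_prodMk_eq_prod {Ω ι β : Type*} [MeasurableSpace Ω]
    [MeasurableSpace β] {P : Measure Ω} [IsFiniteMeasure P] {U : ι → Ω → β}
    (hmeas : ∀ i, Measurable (U i)) (hindep : iIndepFun U P) {i j k : ι}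
    (hij : i ≠ j) (hik : i ≠ k) (hjk : j ≠ k) :
    P.map (fun ω => (U i ω, U j ω, U k ω)) =
      (P.map (U i)).prod ((P.map (U j)).prod (P.map (U k))) := by
  have hjk_indep : IndepFun (U j) (U k) P := hindep.indepFun hjk
  have hi_indep : IndepFun (U i) (fun ω => (U j ω, U k ω)) P :=
    (hindep.indepFun_prodMk hmeas j k i hij.symm hik.symm).symm
  rw [(indepFun_iff_map_prod_eq_prod_map_map (hmeas i).aemeasurable
      ((hmeas j).prodMk (hmeas k)).aemeasurable).mp hi_indep,
    (indepFun_iff_map_prod_eq_prod_map_map (hmeas j).aemeasurable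
      (hmeas k).aemeasurable).mp hjk_indep]

theorem integral_prod_prod_mul_eq_integral_mul_integral {α β γ : Type*} [MeasurableSpace α]
    [MeasurableSpace β] [MeasurableSpace γ] {μ : Measure α} {ν : Measure β} {ρ : Measure γ}
    [SFinite μ] [SFinite ν] [SFinite ρ] (f : α → β → ℝ) (g : β → γ → ℝ)
    (hint : Integrable (fun p : β × α × γ => f p.2.1 p.1 * g p.1 p.2.2) (ν.prod (μ.prod ρ))) :
    ∫ p, f p.2.1 p.1 * g p.1 p.2.2 ∂(ν.prod (μ.prod ρ)) =
      ∫ y, (∫ x, f x y ∂μ) * ∫ z, g y z ∂ρ ∂ν := by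
  rw [integral_prod _ hint]
  congr with y
  exact integral_prod_mul (fun x => f x y) (g y)

theorem integrable_prod_prod_restrict_of_continuous {μ ν ρ : Measure ℝ}
    [IsFiniteMeasureOnCompacts μ] [IsFiniteMeasureOnCompacts ν] [IsFiniteMeasureOnCompacts ρ]
    {s t u : Set ℝ} (hs : IsCompact s) (ht : IsCompact t) (hu : IsCompact u)
    {g : ℝ × ℝ × ℝ → ℝ} (hg : Continuous g) :
    Integrable g ((μ.restrict s).prod ((ν.restrict t).prod (ρ.restrict u))) := by
  rw [Measure.prod_restrict, Measure.prod_restrict]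
  exact hg.continuousOn.integrableOn_compact (hs.prod (ht.prod hu))

/-- `W₁ = W (U 0) (U 1)` and `W₂ = W (U 1) (U 2)`. -/
def W (x y : ℝ) : ℝ := 2 - 3 * |y - x| - 6 * x * (1 - x)

theorem integral_W_sq_left {y : ℝ} (hy : y ∈ Icc (0 : ℝ) 1) :
    ∫ x in Icc (0 : ℝ) 1, W x y ^ 2 = 6/5 - 3*y - 3*y^2 + 12*y^3 - 6*y^4 := by
  rw [integral_Icc_eq_intervalIntegral_add zero_le_one (by unfold W; fun_prop) y]
  have below : ∫ x in (0 : ℝ)..y, W x y ^ 2 = ∫ x in (0 : ℝ)..y,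
      ∑ i, ![(2 - 3*y)^2, 6*(3*y - 2), 12*(2 - 3*y) + 9, -36, 36] i * x ^ (i : ℕ) := by
    refine intervalIntegral.integral_congr fun x hx => ?_
    rw [uIcc_of_le hy.1] at hx
    simp only [W, abs_of_nonneg (sub_nonneg.2 hx.2), Fin.sum_univ_succ, Fin.sum_univ_zero,
      Matrix.cons_val_zero, Matrix.cons_val_succ, Fin.val_zero, Fin.val_succ]
    ring
  have above : ∫ x in y..(1 : ℝ), W x y ^ 2 = ∫ x in y..(1 : ℝ),
      ∑ i, ![(2 + 3*y)^2, -18*(2 + 3*y), 12*(2 + 3*y) + 81, -108, 36] i * x ^ (i : ℕ) := by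
    refine intervalIntegral.integral_congr fun x hx => ?_
    rw [uIcc_of_le hy.2] at hx
    simp only [W, abs_of_nonpos (sub_nonpos.2 hx.1), Fin.sum_univ_succ, Fin.sum_univ_zero,
      Matrix.cons_val_zero, Matrix.cons_val_succ, Fin.val_zero, Fin.val_succ]
    ring
  rw [below, above, intervalIntegral.integral_sum_monomials,
    intervalIntegral.integral_sum_monomials]
  simp only [Fin.sum_univ_succ, Fin.sum_univ_zero, Matrix.cons_val_zero, Matrix.cons_val_succ,
    Fin.val_zero, Fin.val_succ]
  ring

theorem integral_W_sq_right {y : ℝ} (hy : y ∈ Icc (0 : ℝ) 1) :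
    ∫ z in Icc (0 : ℝ) 1, W y z ^ 2 = 1 - 3*y + 3*y^2 := by
  rw [integral_Icc_eq_intervalIntegral_add zero_le_one (by unfold W; fun_prop) y]
  have below : ∫ z in (0 : ℝ)..y, W y z ^ 2 = ∫ z in (0 : ℝ)..y,
      ∑ i, ![(2 - 9*y + 6*y^2)^2, 6*(2 - 9*y + 6*y^2), 9] i * z ^ (i : ℕ) := by
    refine intervalIntegral.integral_congr fun z hz => ?_
    rw [uIcc_of_le hy.1] at hz
    simp only [W, abs_of_nonpos (sub_nonpos.2 hz.2), Fin.sum_univ_succ, Fin.sum_univ_zero,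
      Matrix.cons_val_zero, Matrix.cons_val_succ, Fin.val_zero, Fin.val_succ]
    ring
  have above : ∫ z in y..(1 : ℝ), W y z ^ 2 = ∫ z in y..(1 : ℝ),
      ∑ i, ![(2 - 3*y + 6*y^2)^2, -6*(2 - 3*y + 6*y^2), 9] i * z ^ (i : ℕ) := by
    refine intervalIntegral.integral_congr fun z hz => ?_
    rw [uIcc_of_le hy.2] at hz
    simp only [W, abs_of_nonneg (sub_nonneg.2 hz.1), Fin.sum_univ_succ, Fin.sum_univ_zero,
      Matrix.cons_val_zero, Matrix.cons_val_succ, Fin.val_zero, Fin.val_succ]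
    ring
  rw [below, above, intervalIntegral.integral_sum_monomials,
    intervalIntegral.integral_sum_monomials]
  simp only [Fin.sum_univ_succ, Fin.sum_univ_zero, Matrix.cons_val_zero, Matrix.cons_val_succ,
    Fin.val_zero, Fin.val_succ]
  ring

theorem integral_integral_W_sq_mul_integral_W_sq :
    ∫ y in Icc (0 : ℝ) 1, (∫ x in Icc (0 : ℝ) 1, W x y ^ 2) * ∫ z in Icc (0 : ℝ) 1, W y z ^ 2 =
      23 / 70 := by
  rw [setIntegral_congr_fun measurableSet_Icc fun y hy => by
      rw [integral_W_sq_left hy, integral_W_sq_right hy],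
    integral_Icc_eq_intervalIntegral_add zero_le_one (by fun_prop) 0,
    intervalIntegral.integral_same, zero_add]
  have expand : ∫ y in (0 : ℝ)..1, (6/5 - 3*y - 3*y^2 + 12*y^3 - 6*y^4) * (1 - 3*y + 3*y^2) =
      ∫ y in (0 : ℝ)..1, ∑ i, ![6/5, -33/5, 48/5, 12, -51, 54, -18] i * y ^ (i : ℕ) :=
    intervalIntegral.integral_congr fun y _ => by
      simp only [Fin.sum_univ_succ, Fin.sum_univ_zero, Matrix.cons_val_zero,
        Matrix.cons_val_succ, Fin.val_zero, Fin.val_succ]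
      ring
  rw [expand, intervalIntegral.integral_sum_monomials]
  simp only [Fin.sum_univ_succ, Fin.sum_univ_zero, Matrix.cons_val_zero, Matrix.cons_val_succ,
    Fin.val_zero, Fin.val_succ]
  norm_num

/-- If `U 0, U 1, U 2` are i.i.d. uniform on `[0,1]`,
`W₁ = 2 - 3|U 1 - U 0| - 6 U 0 (1 - U 0)` and `W₂ = 2 - 3|U 2 - U 1| - 6 U 1 (1 - U 1)`,
then `E[W₁² W₂²] = 23/70`. -/
theorem expectation_W1sq_W2sq
    {Ω : Type*} [MeasurableSpace Ω] (P : Measure Ω) [IsProbabilityMeasure P]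
    (U : Fin 3 → Ω → ℝ) (hmeas : ∀ i, Measurable (U i))
    (hindep : iIndepFun U P)
    (hunif : ∀ i, Measure.map (U i) P = volume.restrict (Set.Icc (0:ℝ) 1)) :
    ∫ ω, (2 - 3 * |U 1 ω - U 0 ω| - 6 * U 0 ω * (1 - U 0 ω)) ^ 2
        * (2 - 3 * |U 2 ω - U 1 ω| - 6 * U 1 ω * (1 - U 1 ω)) ^ 2 ∂P = 23 / 70 := by
  set μ := volume.restrict (Icc (0 : ℝ) 1)
  have hmap : P.map (fun ω => (U 1 ω, U 0 ω, U 2 ω)) = μ.prod (μ.prod μ) := by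
    rw [hindep.map_prodMk_prodMk_eq_prod hmeas (by decide) (by decide) (by decide),
      hunif, hunif, hunif]
  have hcont : Continuous fun p : ℝ × ℝ × ℝ => W p.2.1 p.1 ^ 2 * W p.1 p.2.2 ^ 2 := by
    unfold W; fun_prop
  calc _ = ∫ p, W p.2.1 p.1 ^ 2 * W p.1 p.2.2 ^ 2 ∂(P.map fun ω => (U 1 ω, U 0 ω, U 2 ω)) :=
        (integral_map ((hmeas 1).prodMk ((hmeas 0).prodMk (hmeas 2))).aemeasurable
          hcont.aestronglyMeasurable).symm
    _ = ∫ y, (∫ x, W x y ^ 2 ∂μ) * ∫ z, W y z ^ 2 ∂μ ∂μ := by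
      rw [hmap]
      exact integral_prod_prod_mul_eq_integral_mul_integral
        (fun x y => W x y ^ 2) (fun y z => W y z ^ 2)
        (integrable_prod_prod_restrict_of_continuous
          isCompact_Icc isCompact_Icc isCompact_Icc hcont)
    _ = 23 / 70 := integral_integral_W_sq_mul_integral_W_sq
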